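/- arXiv:2103.16309 — 2 statements merged into one kernel-verified Lean document; each statement's English description precedes it below -/
import Mathlib

section
/- Assume that for every skew-symmetrizable initial matrix the sign-coherence property holds (every C-matrix of every pattern is column sign-coherent). Then for every vertex t and every index i, the G-cone σ(G_t) ⊆ ℝⁿ intersects the coordinate hyperplane {v ∈ ℝⁿ : v_i = 0} only in its topological boundary; that is, σ(G_t) ∩ {v : v_i = 0} is contained in the boundary of σ(G_t). -/
/-!
A point of `σ(G_t)` with `v_i = 0` can only be interior if the `i`-th row of `G_t` has entries of
both signs; otherwise the cone lies in one of the half-spaces `v_i ≥ 0`, `v_i ≤ 0`. So it suffices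
that the rows of `G`-matrices are sign-coherent. This follows from sign-coherence of `C`-matrices
by Nakanishi–Zelevinsky duality: the pattern of `B_tᵀ`, run back along the reversed path, has
`C`-matrix `G_tᵀ`. Duality is proved by induction on the path, together with the formulas for
changing the initial matrix `B₀` to `μ_k B₀`. Both rest on the step formulas
`C_{t'} = C_t F_ε`, `G_{t'} = G_t E_ε` (valid because of sign-coherence) and on the invariants
`B₀ C_t = G_t B_t` and `C_tᵀ D G_t = D`.
-/

open Matrix

namespace ClusterPattern

variable {ι : Type*} [Fintype ι] [DecidableEq ι]

/-- Entrywise positive part `[A]₊`. -/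
def posPart (A : Matrix ι ι ℤ) : Matrix ι ι ℤ := Matrix.of fun i j => max (A i j) 0

/-- `A^{•k}`: all columns other than the `k`-th set to `0`. -/
def colSel (k : ι) (A : Matrix ι ι ℤ) : Matrix ι ι ℤ :=
  Matrix.of fun i j => if j = k then A i j else 0

/-- `A^{k•}`: all rows other than the `k`-th set to `0`. -/
def rowSel (k : ι) (A : Matrix ι ι ℤ) : Matrix ι ι ℤ :=
  Matrix.of fun i j => if i = k then A i j else 0

/-- `J_k`: identity with `k`-th diagonal entry replaced by `-1`. -/
def Jmat (k : ι) : Matrix ι ι ℤ := Matrix.diagonal fun i => if i = k then -1 else 1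

/-- A skew-symmetrizable integer matrix. -/
def IsSkewSymmetrizable (B : Matrix ι ι ℤ) : Prop :=
  ∃ D : ι → ℚ, (∀ i, 0 < D i) ∧ ∀ i j, D i * (B i j : ℚ) = -(D j * (B j i : ℚ))

/-- Matrix mutation `μ_k`. -/
def mutate (k : ι) (B : Matrix ι ι ℤ) : Matrix ι ι ℤ :=
  Matrix.of fun i j => if i = k ∨ j = k then -B i j
    else B i j + B i k * max (B k j) 0 + max (-B i k) 0 * B k j

/-- The exchange matrix `B_t` at the vertex reached from `B0` along the path `w`. -/
def Bmat (B0 : Matrix ι ι ℤ) (w : List ι) : Matrix ι ι ℤ :=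
  w.foldl (fun B k => mutate k B) B0

/-- One mutation step of a `C`-matrix. -/
def Cstep (B C : Matrix ι ι ℤ) (k : ι) : Matrix ι ι ℤ :=
  C * Jmat k + C * rowSel k (posPart B) + colSel k (posPart (-C)) * B

/-- One mutation step of a `G`-matrix. -/
def Gstep (B0 B C G : Matrix ι ι ℤ) (k : ι) : Matrix ι ι ℤ :=
  G * Jmat k + G * colSel k (posPart (-B)) - B0 * colSel k (posPart (-C))

/-- The `C`-matrix `C_t` at the vertex reached from the initial matrix `B0` along `w`. -/
def Cmat (B0 : Matrix ι ι ℤ) (w : List ι) : Matrix ι ι ℤ :=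
  (w.foldl (fun p k => (mutate k p.1, Cstep p.1 p.2 k))
    ((B0, 1) : Matrix ι ι ℤ × Matrix ι ι ℤ)).2

/-- The `G`-matrix `G_t` at the vertex reached from the initial matrix `B0` along `w`. -/
def Gmat (B0 : Matrix ι ι ℤ) (w : List ι) : Matrix ι ι ℤ :=
  (w.foldl (fun p k => (mutate k p.1, Cstep p.1 p.2.1 k, Gstep B0 p.1 p.2.1 p.2.2 k))
    ((B0, 1, 1) : Matrix ι ι ℤ × Matrix ι ι ℤ × Matrix ι ι ℤ)).2.2

/-- A nonzero integer vector with all entries nonnegative. -/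
def IsPositiveVec (v : ι → ℤ) : Prop := v ≠ 0 ∧ ∀ i, 0 ≤ v i

/-- A nonzero integer vector with all entries nonpositive. -/
def IsNegativeVec (v : ι → ℤ) : Prop := v ≠ 0 ∧ ∀ i, v i ≤ 0

/-- Every column is a positive or a negative vector. -/
def ColSignCoherent (M : Matrix ι ι ℤ) : Prop :=
  ∀ j, IsPositiveVec (fun i => M i j) ∨ IsNegativeVec (fun i => M i j)

/-- Every row is a positive or a negative vector. -/
def RowSignCoherent (M : Matrix ι ι ℤ) : Prop :=
  ∀ i, IsPositiveVec (fun j => M i j) ∨ IsNegativeVec (fun j => M i j)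

/-- The `G`-cone: nonnegative real combinations of the columns of `G_t`. -/
def Gcone (B0 : Matrix ι ι ℤ) (w : List ι) : Set (ι → ℝ) :=
  {v | ∃ a : ι → ℝ, (∀ j, 0 ≤ a j) ∧ v = fun i => ∑ j, a j * (Gmat B0 w i j : ℝ)}

/-- The subcone of the `G`-cone spanned by the `g`-vectors with indices in `S`. -/
def Gsubcone (B0 : Matrix ι ι ℤ) (w : List ι) (S : Set ι) : Set (ι → ℝ) :=
  {v | ∃ a : ι → ℝ, (∀ j, 0 ≤ a j) ∧ (∀ j ∉ S, a j = 0) ∧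
    v = fun i => ∑ j, a j * (Gmat B0 w i j : ℝ)}

/-- The face `σ_i(G_t)` spanned by the `g`-vectors `g_{j;t}`, `j ≠ i`. -/
def GconeFace (B0 : Matrix ι ι ℤ) (w : List ι) (i : ι) : Set (ι → ℝ) :=
  {v | ∃ a : ι → ℝ, (∀ j, 0 ≤ a j) ∧ a i = 0 ∧
    v = fun l => ∑ j, a j * (Gmat B0 w l j : ℝ)}

end ClusterPattern

lemma IsOpenMap.mem_frontier_of_subset_preimage {X Y : Type*} [TopologicalSpace X]
    [TopologicalSpace Y] {f : X → Y} (hf : IsOpenMap f) {S : Set X} {T : Set Y}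
    (hST : S ⊆ f ⁻¹' T) {x : X} (hx : x ∈ S) (hfx : f x ∉ interior T) : x ∈ frontier S :=
  ⟨subset_closure hx, fun h => hfx <| interior_mono (Set.image_preimage_subset f T) <|
    hf.image_interior_subset _ ⟨x, interior_mono hST h, rfl⟩⟩

namespace ClusterPattern

lemma max_neg_zero (x : ℤ) : max (-x) 0 = max x 0 - x := by omega

lemma mul_max_add_max_neg_mul {ε x : ℤ} (y : ℤ) (hε : ε = 1 ∨ ε = -1) (h : 0 ≤ ε * x) :
    x * max y 0 + max (-x) 0 * y = x * max (ε * y) 0 := by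
  rcases hε with rfl | rfl
  · rw [one_mul, max_eq_right (by linarith : -x ≤ 0)]
    ring
  · rw [max_eq_left (by linarith : (0 : ℤ) ≤ -x), neg_one_mul, max_neg_zero]
    ring

lemma mul_max_add_max_neg_mul_comm (x y : ℤ) :
    x * max y 0 + max (-x) 0 * y = y * max x 0 + max (-y) 0 * x := by
  rw [max_neg_zero, max_neg_zero]
  ring

lemma mul_max_sign_mul {ε : ℤ} (hε : ε = 1 ∨ ε = -1) (x y : ℤ) :
    x * max (ε * y) 0 = x * max y 0 + (max (-x) 0 - max (-(ε * x)) 0) * y := by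
  rcases hε with rfl | rfl
  · rw [one_mul, one_mul]
    ring
  · rw [neg_one_mul, neg_one_mul, neg_neg, max_neg_zero y, max_neg_zero x]
    ring

lemma eq_of_mul_nonneg_of_ne_zero {ε ε' x : ℤ} (hε : ε = 1 ∨ ε = -1) (hε' : ε' = 1 ∨ ε' = -1)
    (h : 0 ≤ ε * x) (h' : 0 ≤ ε' * x) (hx : x ≠ 0) : ε = ε' := by
  rcases hε with rfl | rfl <;> rcases hε' with rfl | rfl <;> omega

def IsSkewSymmetrizer {ι : Type*} (D : ι → ℚ) (B : Matrix ι ι ℤ) : Prop :=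
  ∀ i j, D i * (B i j : ℚ) = -(D j * (B j i : ℚ))

lemma IsSkewSymmetrizer.apply_self {ι : Type*} {D : ι → ℚ} {B : Matrix ι ι ℤ}
    (hs : IsSkewSymmetrizer D B) (hD : ∀ i, 0 < D i) (i : ι) : B i i = 0 := by
  have : (B i i : ℚ) = 0 := by nlinarith [hD i, hs i i]
  exact_mod_cast this

lemma IsSkewSymmetrizable.apply_self {ι : Type*} {B : Matrix ι ι ℤ} (h : IsSkewSymmetrizable B)
    (i : ι) : B i i = 0 :=
  let ⟨_, hD, hs⟩ := h
  IsSkewSymmetrizer.apply_self hs hD i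

lemma ColSignCoherent.exists_sign {ι : Type*} {M : Matrix ι ι ℤ} (h : ColSignCoherent M)
    (k : ι) : ∃ ε : ℤ, (ε = 1 ∨ ε = -1) ∧ (∀ i, 0 ≤ ε * M i k) ∧ ∃ i, M i k ≠ 0 := by
  rcases h k with ⟨hne, hM⟩ | ⟨hne, hM⟩
  · exact ⟨1, Or.inl rfl, fun i => by simpa using hM i, Function.ne_iff.1 hne⟩
  · exact ⟨-1, Or.inr rfl, fun i => by simpa using hM i, Function.ne_iff.1 hne⟩

section Mutation

variable {ι : Type*} [DecidableEq ι]

lemma mutate_apply (k : ι) (B : Matrix ι ι ℤ) (i j : ι) :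
    mutate k B i j = if i = k ∨ j = k then -B i j
      else B i j + B i k * max (B k j) 0 + max (-B i k) 0 * B k j := rfl

lemma mutate_apply_left_self (k : ι) (B : Matrix ι ι ℤ) (j : ι) : mutate k B k j = -B k j := by
  simp [mutate_apply]

lemma mutate_apply_right_self (k : ι) (B : Matrix ι ι ℤ) (i : ι) : mutate k B i k = -B i k := by
  simp [mutate_apply]

lemma mutate_mutate (k : ι) (B : Matrix ι ι ℤ) : mutate k (mutate k B) = B := by
  ext i j
  by_cases h : i = k ∨ j = k
  · simp [mutate_apply, h]
  · rw [mutate_apply, if_neg h, mutate_apply, if_neg h, mutate_apply_right_self,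
      mutate_apply_left_self, neg_neg, max_neg_zero (B k j), max_neg_zero (B i k)]
    ring

lemma mutate_transpose (k : ι) (B : Matrix ι ι ℤ) : mutate k Bᵀ = (mutate k B)ᵀ := by
  ext i j
  by_cases h : i = k ∨ j = k
  · simp [mutate_apply, h, or_comm]
  · simp only [Matrix.transpose_apply, mutate_apply, if_neg h, if_neg (mt Or.symm h)]
    linarith [mul_max_add_max_neg_mul_comm (B k i) (B j k)]

lemma Bmat_append_singleton (B : Matrix ι ι ℤ) (w : List ι) (k : ι) :
    Bmat B (w ++ [k]) = mutate k (Bmat B w) := by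
  simp [Bmat]

lemma fst_foldl_mutate {α : Type*} (f : Matrix ι ι ℤ × α → ι → α) (w : List ι)
    (p : Matrix ι ι ℤ × α) : (w.foldl (fun p k => (mutate k p.1, f p k)) p).1 = Bmat p.1 w :=
  (List.foldl_hom Prod.fst fun _ _ => rfl).symm

lemma Bmat_cons (B : Matrix ι ι ℤ) (k : ι) (u : List ι) :
    Bmat B (k :: u) = Bmat (mutate k B) u := rfl

lemma Bmat_transpose_reverse (w : List ι) (B : Matrix ι ι ℤ) :
    Bmat (Bmat B w)ᵀ w.reverse = Bᵀ := by
  induction w generalizing B with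
  | nil => rfl
  | cons k u ih =>
    rw [List.reverse_cons, Bmat_append_singleton, Bmat_cons, ih, mutate_transpose, mutate_mutate]

lemma IsSkewSymmetrizer.mutate {D : ι → ℚ} {B : Matrix ι ι ℤ} (hs : IsSkewSymmetrizer D B)
    (hD : ∀ i, 0 < D i) (k : ι) : IsSkewSymmetrizer D (mutate k B) := by
  have hmax : ∀ x : ℚ, max x 0 = (x + |x|) / 2 := fun x => by
    rcases abs_cases x with ⟨h, h'⟩ | ⟨h, h'⟩
    · rw [max_eq_left h', h]; ring
    · rw [max_eq_right h'.le, h]; ring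
  have habs : ∀ i j, D i * |(B i j : ℚ)| = D j * |(B j i : ℚ)| := fun i j => by
    rw [← abs_of_pos (hD i), ← abs_of_pos (hD j), ← abs_mul, ← abs_mul, hs i j, abs_neg]
  intro i j
  by_cases h : i = k ∨ j = k
  · simp only [mutate_apply, if_pos h, if_pos h.symm]
    push_cast
    linarith [hs i j]
  · simp only [mutate_apply, if_neg h, if_neg (mt Or.symm h)]
    push_cast
    rw [hmax (B k j), hmax (B k i), hmax (-(B i k : ℚ)), hmax (-(B j k : ℚ)), abs_neg, abs_neg]
    linear_combination hs i j + (|(B k j : ℚ)| / 2) * hs i k + ((B k j : ℚ) / 2) * habs i k +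
      (|(B k i : ℚ)| / 2) * hs j k + ((B k i : ℚ) / 2) * habs j k

lemma IsSkewSymmetrizer.Bmat {D : ι → ℚ} {B : Matrix ι ι ℤ} (hs : IsSkewSymmetrizer D B)
    (hD : ∀ i, 0 < D i) (w : List ι) : IsSkewSymmetrizer D (Bmat B w) := by
  induction w generalizing B with
  | nil => exact hs
  | cons k u ih => exact ih (hs.mutate hD k)

lemma IsSkewSymmetrizable.mutate {B : Matrix ι ι ℤ} (h : IsSkewSymmetrizable B) (k : ι) :
    IsSkewSymmetrizable (mutate k B) :=
  let ⟨D, hD, hs⟩ := h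
  ⟨D, hD, IsSkewSymmetrizer.mutate hs hD k⟩

lemma IsSkewSymmetrizable.Bmat {B : Matrix ι ι ℤ} (h : IsSkewSymmetrizable B) (w : List ι) :
    IsSkewSymmetrizable (Bmat B w) :=
  let ⟨D, hD, hs⟩ := h
  ⟨D, hD, IsSkewSymmetrizer.Bmat hs hD w⟩

end Mutation

lemma IsSkewSymmetrizable.transpose {ι : Type*} {B : Matrix ι ι ℤ} (h : IsSkewSymmetrizable B) :
    IsSkewSymmetrizable Bᵀ := by
  obtain ⟨D, hD, hs⟩ := h
  refine ⟨fun i => (D i)⁻¹, fun i => inv_pos.2 (hD i), fun i j => ?_⟩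
  have := hs j i
  simp only [Matrix.transpose_apply]
  field_simp [(hD i).ne', (hD j).ne']
  linarith

section ExchangeMatrices

variable {ι : Type*} [DecidableEq ι]

def Fmat (B : Matrix ι ι ℤ) (k : ι) (ε : ℤ) : Matrix ι ι ℤ :=
  Jmat k + rowSel k (posPart (ε • B))

def Emat (B : Matrix ι ι ℤ) (k : ι) (ε : ℤ) : Matrix ι ι ℤ :=
  Jmat k + colSel k (posPart (-ε • B))

lemma Fmat_apply (B : Matrix ι ι ℤ) (k : ι) (ε : ℤ) (i j : ι) :
    Fmat B k ε i j = (if i = j then (if i = k then -1 else 1) else 0) +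
      (if i = k then max (ε * B k j) 0 else 0) := by
  by_cases h : i = k <;> simp [Fmat, Jmat, rowSel, posPart, Matrix.diagonal_apply, h]

lemma Emat_apply (B : Matrix ι ι ℤ) (k : ι) (ε : ℤ) (i j : ι) :
    Emat B k ε i j = (if i = j then (if i = k then -1 else 1) else 0) +
      (if j = k then max (-(ε * B i k)) 0 else 0) := by
  by_cases h : j = k <;> simp [Emat, Jmat, colSel, posPart, Matrix.diagonal_apply, h]

lemma Fmat_transpose (B : Matrix ι ι ℤ) (k : ι) (ε : ℤ) : (Fmat B k ε)ᵀ = Emat Bᵀ k (-ε) := by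
  ext i j
  by_cases hij : i = j
  · subst hij
    simp [Fmat_apply, Emat_apply]
  · simp [Fmat_apply, Emat_apply, hij, Ne.symm hij]

lemma Emat_transpose (B : Matrix ι ι ℤ) (k : ι) (ε : ℤ) : (Emat B k ε)ᵀ = Fmat Bᵀ k (-ε) := by
  rw [← Matrix.transpose_transpose (Fmat Bᵀ k (-ε)), Fmat_transpose, neg_neg,
    Matrix.transpose_transpose]

lemma Fmat_mutate (B : Matrix ι ι ℤ) (k : ι) (ε : ℤ) : Fmat (mutate k B) k ε = Fmat B k (-ε) := by
  ext i j
  simp [Fmat_apply, mutate_apply_left_self]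

lemma Emat_mutate (B : Matrix ι ι ℤ) (k : ι) (ε : ℤ) : Emat (mutate k B) k ε = Emat B k (-ε) := by
  ext i j
  simp [Emat_apply, mutate_apply_right_self]

variable [Fintype ι]

lemma mul_Jmat_apply (M : Matrix ι ι ℤ) (k i l : ι) :
    (M * Jmat k) i l = if l = k then -M i l else M i l := by
  simp only [Jmat, Matrix.mul_diagonal]
  split_ifs <;> ring

lemma Jmat_mul_apply (M : Matrix ι ι ℤ) (k i l : ι) :
    (Jmat k * M) i l = if i = k then -M i l else M i l := by
  simp only [Jmat, Matrix.diagonal_mul]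
  split_ifs <;> ring

lemma mul_rowSel_apply (M N : Matrix ι ι ℤ) (k i l : ι) :
    (M * rowSel k N) i l = M i k * N k l := by
  simp [Matrix.mul_apply, rowSel]

lemma rowSel_mul_apply (M N : Matrix ι ι ℤ) (k i l : ι) :
    (rowSel k N * M) i l = if i = k then ∑ a, N k a * M a l else 0 := by
  split_ifs with h <;> simp [Matrix.mul_apply, rowSel, h]

lemma mul_colSel_apply (M N : Matrix ι ι ℤ) (k i l : ι) :
    (M * colSel k N) i l = if l = k then ∑ a, M i a * N a k else 0 := by
  split_ifs with h <;> simp [Matrix.mul_apply, colSel, h]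

lemma colSel_mul_apply (M N : Matrix ι ι ℤ) (k i l : ι) :
    (colSel k N * M) i l = N i k * M k l := by
  simp [Matrix.mul_apply, colSel]

lemma mul_Fmat_apply (B M : Matrix ι ι ℤ) (k : ι) (ε : ℤ) (i l : ι) :
    (M * Fmat B k ε) i l = (if l = k then -M i l else M i l) + M i k * max (ε * B k l) 0 := by
  simp [Fmat, Matrix.mul_add, mul_Jmat_apply, mul_rowSel_apply, posPart]

lemma Fmat_mul_apply (B M : Matrix ι ι ℤ) (k : ι) (ε : ℤ) (i l : ι) :
    (Fmat B k ε * M) i l =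
      if i = k then -M i l + ∑ a, max (ε * B k a) 0 * M a l else M i l := by
  split_ifs with h <;> simp [Fmat, Matrix.add_mul, Jmat_mul_apply, rowSel_mul_apply, posPart, h]

lemma mul_Emat_apply (B M : Matrix ι ι ℤ) (k : ι) (ε : ℤ) (i l : ι) :
    (M * Emat B k ε) i l =
      if l = k then -M i l + ∑ a, M i a * max (-(ε * B a k)) 0 else M i l := by
  split_ifs with h <;> simp [Emat, Matrix.mul_add, mul_Jmat_apply, mul_colSel_apply, posPart, h]

lemma Emat_mul_apply (B M : Matrix ι ι ℤ) (k : ι) (ε : ℤ) (i l : ι) :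
    (Emat B k ε * M) i l = (if i = k then -M i l else M i l) + max (-(ε * B i k)) 0 * M k l := by
  simp [Emat, Matrix.add_mul, Jmat_mul_apply, colSel_mul_apply, posPart]

lemma Fmat_mul_self {B : Matrix ι ι ℤ} {k : ι} (hB : B k k = 0) (ε : ℤ) :
    Fmat B k ε * Fmat B k ε = 1 := by
  ext i l
  by_cases hi : i = k
  · subst hi
    by_cases hl : l = i
    · subst hl
      simp [Fmat_mul_apply, Fmat_apply, hB, mul_ite]
    · simp [Fmat_mul_apply, Fmat_apply, hB, hl, Ne.symm hl, Finset.sum_add_distrib, mul_add,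
        mul_ite]
  · simp [Fmat_mul_apply, Fmat_apply, hi, Matrix.one_apply]

lemma Emat_mul_self {B : Matrix ι ι ℤ} {k : ι} (hB : B k k = 0) (ε : ℤ) :
    Emat B k ε * Emat B k ε = 1 := by
  rw [← Matrix.transpose_transpose (Emat B k ε), Emat_transpose, ← Matrix.transpose_mul,
    Fmat_mul_self (B := Bᵀ) hB, Matrix.transpose_one]

lemma mul_Fmat_eq_Emat_mul_mutate {B : Matrix ι ι ℤ} {k : ι} (hB : B k k = 0) {ε : ℤ}
    (hε : ε = 1 ∨ ε = -1) : B * Fmat B k ε = Emat B k ε * mutate k B := by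
  ext i j
  rw [mul_Fmat_apply, Emat_mul_apply]
  by_cases hik : i = k
  · subst hik
    by_cases hj : j = i <;> simp [mutate_apply_left_self, hB, hj]
  · by_cases hjk : j = k
    · subst hjk
      simp [mutate_apply_right_self, hB, hik]
    · rw [if_neg hik, if_neg hjk, mutate_apply, if_neg (by tauto), mutate_apply_left_self,
        mul_max_sign_mul hε (B i k) (B k j)]
      ring

lemma Cstep_eq_mul_Fmat {B C : Matrix ι ι ℤ} {k : ι} {ε : ℤ} (hε : ε = 1 ∨ ε = -1)
    (hC : ∀ i, 0 ≤ ε * C i k) : Cstep B C k = C * Fmat B k ε := by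
  rw [Cstep, Fmat, Matrix.mul_add, add_assoc]
  congr 1
  ext i l
  simp only [Matrix.add_apply, mul_rowSel_apply, colSel_mul_apply, posPart, Matrix.of_apply,
    Matrix.neg_apply, Matrix.smul_apply, smul_eq_mul]
  exact mul_max_add_max_neg_mul (B k l) hε (hC i)

lemma Gstep_eq_mul_Emat {B0 B C G : Matrix ι ι ℤ} {k : ι} {ε : ℤ} (hε : ε = 1 ∨ ε = -1)
    (hC : ∀ i, 0 ≤ ε * C i k) (hBC : B0 * C = G * B) : Gstep B0 B C G k = G * Emat B k ε := by
  rw [Gstep, Emat, Matrix.mul_add, add_sub_assoc]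
  congr 1
  ext i l
  simp only [Matrix.sub_apply, mul_colSel_apply, posPart, Matrix.of_apply, Matrix.neg_apply,
    Matrix.smul_apply, smul_eq_mul]
  split_ifs with hl
  · subst hl
    rcases hε with rfl | rfl
    · have hC0 : ∀ a, max (-C a l) 0 = 0 := fun a => max_eq_right (by linarith [hC a])
      simp [hC0]
    · have hC0 : ∀ a, max (-C a l) 0 = -C a l := fun a => max_eq_left (by linarith [hC a])
      have hsum : ∑ a, B0 i a * -C a l = -∑ a, G i a * B a l := by
        simp only [mul_neg, Finset.sum_neg_distrib, ← Matrix.mul_apply, hBC]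
      simp only [hC0, hsum, sub_neg_eq_add, ← Finset.sum_add_distrib]
      refine Finset.sum_congr rfl fun a _ => ?_
      rw [neg_neg, one_mul, max_neg_zero]
      ring
  · simp

end ExchangeMatrices

section Patterns

variable {ι : Type*} [Fintype ι] [DecidableEq ι]

lemma Cmat_append_singleton (B : Matrix ι ι ℤ) (w : List ι) (k : ι) :
    Cmat B (w ++ [k]) = Cstep (Bmat B w) (Cmat B w) k := by
  simp only [Cmat, List.foldl_append, List.foldl_cons, List.foldl_nil, fst_foldl_mutate]

lemma Gmat_append_singleton (B : Matrix ι ι ℤ) (w : List ι) (k : ι) :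
    Gmat B (w ++ [k]) = Gstep B (Bmat B w) (Cmat B w) (Gmat B w) k := by
  have hC : (w.foldl (fun p k => (mutate k p.1, Cstep p.1 p.2.1 k, Gstep B p.1 p.2.1 p.2.2 k))
      ((B, 1, 1) : Matrix ι ι ℤ × Matrix ι ι ℤ × Matrix ι ι ℤ)).2.1 = Cmat B w :=
    congrArg Prod.snd (List.foldl_hom
      (fun p : Matrix ι ι ℤ × Matrix ι ι ℤ × Matrix ι ι ℤ => (p.1, p.2.1)) fun _ _ => rfl).symm
  simp only [Gmat, List.foldl_append, List.foldl_cons, List.foldl_nil, fst_foldl_mutate, hC]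

lemma Cmat_append_singleton_eq_mul_Fmat {B0 : Matrix ι ι ℤ} {w : List ι} {k : ι} {ε : ℤ}
    (hε : ε = 1 ∨ ε = -1) (hC : ∀ i, 0 ≤ ε * Cmat B0 w i k) :
    Cmat B0 (w ++ [k]) = Cmat B0 w * Fmat (Bmat B0 w) k ε := by
  rw [Cmat_append_singleton, Cstep_eq_mul_Fmat hε hC]

variable (ι) in
def SignCoherence : Prop :=
  ∀ B : Matrix ι ι ℤ, IsSkewSymmetrizable B → ∀ w : List ι, ColSignCoherent (Cmat B w)

lemma mul_Cmat_eq_Gmat_mul_Bmat (hsc : SignCoherence ι) {B0 : Matrix ι ι ℤ}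
    (hB0 : IsSkewSymmetrizable B0) (w : List ι) : B0 * Cmat B0 w = Gmat B0 w * Bmat B0 w := by
  induction w using List.reverseRecOn with
  | nil => exact (Matrix.mul_one B0).trans (Matrix.one_mul B0).symm
  | append_singleton w k ih =>
    obtain ⟨ε, hε, hC, -⟩ := (hsc B0 hB0 w).exists_sign k
    rw [Cmat_append_singleton_eq_mul_Fmat hε hC, Gmat_append_singleton, Gstep_eq_mul_Emat hε hC ih,
      Bmat_append_singleton, ← Matrix.mul_assoc, ih, Matrix.mul_assoc, Matrix.mul_assoc,
      mul_Fmat_eq_Emat_mul_mutate ((hB0.Bmat w).apply_self k) hε]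

lemma Gmat_append_singleton_eq_mul_Emat (hsc : SignCoherence ι) {B0 : Matrix ι ι ℤ}
    (hB0 : IsSkewSymmetrizable B0) {w : List ι} {k : ι} {ε : ℤ} (hε : ε = 1 ∨ ε = -1)
    (hC : ∀ i, 0 ≤ ε * Cmat B0 w i k) :
    Gmat B0 (w ++ [k]) = Gmat B0 w * Emat (Bmat B0 w) k ε := by
  rw [Gmat_append_singleton, Gstep_eq_mul_Emat hε hC (mul_Cmat_eq_Gmat_mul_Bmat hsc hB0 w)]

lemma exists_mutation_step (hsc : SignCoherence ι) {B0 : Matrix ι ι ℤ}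
    (hB0 : IsSkewSymmetrizable B0) (w : List ι) (k : ι) :
    ∃ ε : ℤ, (ε = 1 ∨ ε = -1) ∧ Cmat B0 (w ++ [k]) = Cmat B0 w * Fmat (Bmat B0 w) k ε ∧
      Gmat B0 (w ++ [k]) = Gmat B0 w * Emat (Bmat B0 w) k ε := by
  obtain ⟨ε, hε, hC, -⟩ := (hsc B0 hB0 w).exists_sign k
  exact ⟨ε, hε, Cmat_append_singleton_eq_mul_Fmat hε hC,
    Gmat_append_singleton_eq_mul_Emat hsc hB0 hε hC⟩

lemma isUnit_Cmat (hsc : SignCoherence ι) {B0 : Matrix ι ι ℤ} (hB0 : IsSkewSymmetrizable B0)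
    (w : List ι) : IsUnit (Cmat B0 w) := by
  induction w using List.reverseRecOn with
  | nil => exact isUnit_one
  | append_singleton w k ih =>
    obtain ⟨ε, -, hC, -⟩ := exists_mutation_step hsc hB0 w k
    rw [hC]
    exact ih.mul (.of_mul_eq_one _ (Fmat_mul_self ((hB0.Bmat w).apply_self k) ε))

lemma isUnit_Gmat (hsc : SignCoherence ι) {B0 : Matrix ι ι ℤ} (hB0 : IsSkewSymmetrizable B0)
    (w : List ι) : IsUnit (Gmat B0 w) := by
  induction w using List.reverseRecOn with
  | nil => exact isUnit_one
  | append_singleton w k ih =>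
    obtain ⟨ε, -, -, hG⟩ := exists_mutation_step hsc hB0 w k
    rw [hG]
    exact ih.mul (.of_mul_eq_one _ (Emat_mul_self ((hB0.Bmat w).apply_self k) ε))

lemma isUnit_apply_of_col_eq_zero {R : Type*} [CommSemiring R] {M : Matrix ι ι R} (hM : IsUnit M)
    {j k : ι} (hcol : ∀ l ≠ k, M l j = 0) : IsUnit (M k j) := by
  obtain ⟨u, rfl⟩ := hM
  have h := congrFun (congrFun u.inv_mul j) j
  rw [Matrix.mul_apply, Finset.sum_eq_single k (fun l _ hl => by rw [hcol l hl, mul_zero])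
    (by simp), Matrix.one_apply_eq] at h
  exact .of_mul_eq_one_right _ h

lemma isUnit_apply_of_row_eq_zero {R : Type*} [CommSemiring R] {M : Matrix ι ι R} (hM : IsUnit M)
    {j k : ι} (hrow : ∀ l ≠ j, M k l = 0) : IsUnit (M k j) :=
  isUnit_apply_of_col_eq_zero (M := Mᵀ) ((Matrix.isUnit_transpose M).2 hM) hrow

def castQ (M : Matrix ι ι ℤ) : Matrix ι ι ℚ := (Int.castRingHom ℚ).mapMatrix M

@[simp]
lemma castQ_apply (M : Matrix ι ι ℤ) (i j : ι) : castQ M i j = (M i j : ℚ) := rfl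

lemma castQ_mul (M N : Matrix ι ι ℤ) : castQ (M * N) = castQ M * castQ N := map_mul _ M N

lemma Fmat_transpose_mul_diagonal_mul_Emat {D : ι → ℚ} {B : Matrix ι ι ℤ}
    (hs : IsSkewSymmetrizer D B) (hD : ∀ i, 0 < D i) (k : ι) (ε : ℤ) :
    (castQ (Fmat B k ε))ᵀ * diagonal D * castQ (Emat B k ε) = diagonal D := by
  have hkk : B k k = 0 := hs.apply_self hD k
  ext i j
  simp [Matrix.mul_apply, Fmat_apply, Emat_apply, Matrix.diagonal_apply, add_mul, mul_add,
    ite_mul, mul_ite, Finset.sum_add_distrib, Finset.sum_ite_eq']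
  rcases eq_or_ne j k with rfl | hjk
  · rcases eq_or_ne i j with rfl | hij
    · simp [hkk]
    · have key : D i * max (-(ε * B i j : ℚ)) 0 = D j * max (ε * B j i : ℚ) 0 := by
        rw [mul_max_of_nonneg _ _ (hD i).le, mul_max_of_nonneg _ _ (hD j).le, mul_zero, mul_zero]
        congr 1
        linear_combination (-(ε : ℚ)) * hs i j
      simp [hij, Ne.symm hij, hkk]
      linear_combination key
  · by_cases hij : i = j
    · simp [hjk, hij]
    · simp [hjk, hij, Ne.symm hij]

lemma Cmat_transpose_mul_diagonal_mul_Gmat (hsc : SignCoherence ι) {B0 : Matrix ι ι ℤ}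
    {D : ι → ℚ} (hs : IsSkewSymmetrizer D B0) (hD : ∀ i, 0 < D i) (w : List ι) :
    (castQ (Cmat B0 w))ᵀ * diagonal D * castQ (Gmat B0 w) = diagonal D := by
  induction w using List.reverseRecOn with
  | nil => simp [Cmat, Gmat, castQ]
  | append_singleton w k ih =>
    obtain ⟨ε, -, hC, hG⟩ := exists_mutation_step hsc ⟨D, hD, hs⟩ w k
    rw [hC, hG, castQ_mul, castQ_mul, Matrix.transpose_mul]
    calc _ = (castQ (Fmat (Bmat B0 w) k ε))ᵀ *
          ((castQ (Cmat B0 w))ᵀ * diagonal D * castQ (Gmat B0 w)) *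
          castQ (Emat (Bmat B0 w) k ε) := by simp only [Matrix.mul_assoc]
      _ = diagonal D := by rw [ih, Fmat_transpose_mul_diagonal_mul_Emat (hs.Bmat hD w) hD]

lemma mul_diagonal_inv_mul_transpose {K : Type*} [Field K] {A B : Matrix ι ι K} {d : ι → K}
    (hd : ∀ i, d i ≠ 0) (h : Aᵀ * diagonal d * B = diagonal d) :
    B * diagonal d⁻¹ * Aᵀ = diagonal d⁻¹ := by
  have hinv : diagonal d⁻¹ * diagonal d = 1 := by
    rw [Matrix.diagonal_mul_diagonal, ← Matrix.diagonal_one]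
    exact congrArg diagonal (funext fun i => inv_mul_cancel₀ (hd i))
  have hinv' : diagonal d * diagonal d⁻¹ = 1 := by
    rw [Matrix.diagonal_mul_diagonal, ← Matrix.diagonal_one]
    exact congrArg diagonal (funext fun i => mul_inv_cancel₀ (hd i))
  have hleft : diagonal d⁻¹ * Aᵀ * diagonal d * B = 1 := by
    rw [Matrix.mul_assoc, Matrix.mul_assoc, ← Matrix.mul_assoc Aᵀ, h, hinv]
  calc B * diagonal d⁻¹ * Aᵀ = B * (diagonal d⁻¹ * Aᵀ * diagonal d) * diagonal d⁻¹ := by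
        simp only [Matrix.mul_assoc, hinv', Matrix.mul_one]
    _ = diagonal d⁻¹ := by rw [mul_eq_one_comm.1 hleft, Matrix.one_mul]

end Patterns

lemma mul_nonpos_of_mul_neg {ι : Type*} {v : ι → ℤ} (hv : IsPositiveVec v ∨ IsNegativeVec v)
    {δ : ℤ} (hδ : δ = 1 ∨ δ = -1) {l₁ : ι} (hl₁ : δ * v l₁ < 0) (l : ι) : δ * v l ≤ 0 := by
  rcases hv with ⟨-, hv⟩ | ⟨-, hv⟩ <;> rcases hδ with rfl | rfl <;> linarith [hv l, hv l₁]

section Duality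

variable {ι : Type*} [Fintype ι] [DecidableEq ι]

lemma Fmat_neg_mul_mul_Fmat_neg {B₁ Bt C G : Matrix ι ι ℤ} {k j : ι} {c : ℤ}
    (hC : ∀ i, C i j = if i = k then c else 0) (hG : ∀ l, G k l = if l = j then c else 0)
    (hBC : B₁ * C = G * Bt) (hB₁ : B₁ k k = 0) (hBt : Bt j j = 0) :
    Fmat B₁ k (-c) * C * Fmat Bt j (-c) = Fmat B₁ k c * C * Fmat Bt j c := by
  have hcol : ∀ e : ℤ, ∑ a, max (e * B₁ k a) 0 * C a j = 0 := fun e =>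
    Finset.sum_eq_zero fun a _ => by
      rw [hC a]
      split_ifs with h
      · rw [h, hB₁, mul_zero, max_self, zero_mul]
      · rw [mul_zero]
  have hGBt : ∀ l, (G * Bt) k l = c * Bt j l := fun l => by
    rw [Matrix.mul_apply, Finset.sum_eq_single j (fun b _ hb => by rw [hG b, if_neg hb, zero_mul])
      (by simp), hG j, if_pos rfl]
  have hdiff : ∀ l, ∑ a, max (-c * B₁ k a) 0 * C a l =
      ∑ a, max (c * B₁ k a) 0 * C a l - c * (c * Bt j l) := fun l => by
    rw [← hGBt l, ← hBC, Matrix.mul_apply, Finset.mul_sum, ← Finset.sum_sub_distrib]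
    refine Finset.sum_congr rfl fun a _ => ?_
    rw [neg_mul, max_neg_zero]
    ring
  ext i l
  rw [mul_Fmat_apply, mul_Fmat_apply, Fmat_mul_apply, Fmat_mul_apply, Fmat_mul_apply,
    Fmat_mul_apply]
  by_cases hik : i = k
  · subst hik
    simp only [↓reduceIte]
    rw [hC i, if_pos rfl, hcol, hcol, hdiff l, neg_mul c (Bt j l), max_neg_zero (c * Bt j l)]
    split_ifs with h
    · rw [h, hBt]
      ring
    · ring
  · simp only [if_neg hik]
    rw [hC i, if_neg hik]
    ring

lemma Emat_neg_mul_mul_Emat_neg {B₁ Bt C G : Matrix ι ι ℤ} {k j : ι} {c : ℤ}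
    (hC : ∀ i, C i j = if i = k then c else 0) (hG : ∀ l, G k l = if l = j then c else 0)
    (hBC : B₁ * C = G * Bt) (hB₁ : B₁ k k = 0) (hBt : Bt j j = 0) :
    Emat B₁ k (-c) * G * Emat Bt j (-c) = Emat B₁ k c * G * Emat Bt j c := by
  have hBC' : Btᵀ * Gᵀ = Cᵀ * B₁ᵀ := by
    rw [← Matrix.transpose_mul, ← Matrix.transpose_mul, hBC]
  have := Fmat_neg_mul_mul_Fmat_neg (B₁ := Btᵀ) (Bt := B₁ᵀ) (C := Gᵀ) (G := Cᵀ) hG hC hBC' hBt hB₁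
  apply Matrix.transpose_injective
  simpa only [Matrix.transpose_mul, Emat_transpose, neg_neg, Matrix.mul_assoc] using this.symm

lemma row_eq_single_of_col_eq_single {C G : Matrix ι ι ℤ} {D : ι → ℚ} (hD : ∀ i, 0 < D i)
    (h : (castQ C)ᵀ * diagonal D * castQ G = diagonal D) (hG : IsUnit G) {j k : ι} {c : ℤ}
    (hc : c = 1 ∨ c = -1) (hC : ∀ i, C i j = if i = k then c else 0) (l : ι) :
    G k l = if l = j then c else 0 := by
  have hrow : ∀ l, (c : ℚ) * D k * G k l = if j = l then D j else 0 := fun l => by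
    have := congrFun (congrFun h j) l
    simpa [Matrix.mul_apply, Matrix.mul_diagonal, hC, Matrix.diagonal_apply] using this
  have hoff : ∀ l ≠ j, G k l = 0 := fun l hl => by
    have := hrow l
    rw [if_neg (Ne.symm hl)] at this
    have hc0 : (c : ℚ) ≠ 0 := by rcases hc with rfl | rfl <;> norm_num
    exact_mod_cast (mul_eq_zero.1 this).resolve_left (mul_ne_zero hc0 (hD k).ne')
  split_ifs with hl
  · subst hl
    have hpos := hrow l
    rw [if_pos rfl] at hpos
    -- `c D_k G_{kl} = D_l > 0` with `c, G_{kl} = ±1` forces `G_{kl} = c`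
    rcases hc with rfl | rfl <;>
      rcases Int.isUnit_iff.1 (isUnit_apply_of_row_eq_zero hG hoff) with hm | hm <;>
      rw [hm] at hpos ⊢ <;> first | rfl | (push_cast at hpos; nlinarith [hD k, hD l])
  · exact hoff l hl

lemma exists_ne_apply_ne_zero_of_mul_transpose_eq_diagonal {C G : Matrix ι ι ℤ} {d : ι → ℚ}
    (hd : ∀ i, d i ≠ 0) (h : castQ G * diagonal d * (castQ C)ᵀ = diagonal d) (hG : IsUnit G)
    {j k l₀ : ι} (hl₀ : l₀ ≠ k) (hC : C l₀ j ≠ 0) : ∃ l ≠ j, G k l ≠ 0 := by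
  by_contra! hrow
  have hGkj : G k j ≠ 0 := (isUnit_apply_of_row_eq_zero hG hrow).ne_zero
  have := congrFun (congrFun h k) l₀
  rw [Matrix.mul_apply, Matrix.diagonal_apply_ne _ (Ne.symm hl₀)] at this
  simp only [Matrix.mul_diagonal, Matrix.transpose_apply, castQ_apply] at this
  rw [Finset.sum_eq_single j (fun a _ ha => by rw [hrow a ha]; simp) (by simp)] at this
  simp_all

def InitialMutationFormula (B0 : Matrix ι ι ℤ) (k : ι) (u : List ι) (δ : ℤ) : Prop :=
  Cmat B0 (k :: u) = Fmat (mutate k B0) k δ * Cmat (mutate k B0) u ∧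
    Gmat B0 (k :: u) = Emat (mutate k B0) k δ * Gmat (mutate k B0) u ∧
    ∀ l, δ * Gmat (mutate k B0) u k l ≤ 0

def InitialMutationAt (k : ι) (u : List ι) : Prop :=
  ∀ B0 : Matrix ι ι ℤ, IsSkewSymmetrizable B0 →
    ∃ δ : ℤ, (δ = 1 ∨ δ = -1) ∧ InitialMutationFormula B0 k u δ

def DualityAt (w : List ι) : Prop :=
  ∀ B0 : Matrix ι ι ℤ, IsSkewSymmetrizable B0 → Cmat (Bmat B0 w)ᵀ w.reverse = (Gmat B0 w)ᵀ

lemma DualityAt.rowSignCoherent (hsc : SignCoherence ι) {w : List ι} (h : DualityAt w)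
    {B0 : Matrix ι ι ℤ} (hB0 : IsSkewSymmetrizable B0) : RowSignCoherent (Gmat B0 w) := by
  have := hsc _ (hB0.Bmat w).transpose w.reverse
  rwa [h B0 hB0] at this

lemma dualityAt_nil : DualityAt ([] : List ι) := fun _ _ => Matrix.transpose_one.symm

lemma DualityAt.cons {k : ι} {u : List ι} (hS : InitialMutationAt k u)
    (h : DualityAt u) : DualityAt (k :: u) := by
  intro B0 hB0
  obtain ⟨δ, hδ, -, hG, hsign⟩ := hS B0 hB0
  have hcoh : ∀ i, 0 ≤ -δ * (Gmat (mutate k B0) u)ᵀ i k := fun i => by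
    rw [Matrix.transpose_apply, neg_mul]
    exact neg_nonneg.2 (hsign i)
  rw [Bmat_cons, List.reverse_cons, Cmat_append_singleton, Bmat_transpose_reverse,
    h _ (hB0.mutate k), Cstep_eq_mul_Fmat (by omega) hcoh, hG, Matrix.transpose_mul,
    Emat_transpose]

lemma initialMutationAt_nil (k : ι) : InitialMutationAt k ([] : List ι) := by
  intro B0 _
  have hcoh : ∀ i, 0 ≤ (1 : ℤ) * (1 : Matrix ι ι ℤ) i k := fun i => by
    rw [one_mul, Matrix.one_apply]
    split_ifs <;> norm_num
  refine ⟨-1, Or.inr rfl, ?_, ?_, fun l => ?_⟩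
  · show Cstep B0 1 k = Fmat (mutate k B0) k (-1) * 1
    rw [Cstep_eq_mul_Fmat (Or.inl rfl) hcoh, Fmat_mutate, neg_neg, Matrix.one_mul, Matrix.mul_one]
  · show Gstep B0 B0 1 1 k = Emat (mutate k B0) k (-1) * 1
    rw [Gstep_eq_mul_Emat (Or.inl rfl) hcoh (by rw [Matrix.mul_one, Matrix.one_mul]), Emat_mutate,
      neg_neg, Matrix.one_mul, Matrix.mul_one]
  · show -1 * (1 : Matrix ι ι ℤ) k l ≤ 0
    rw [Matrix.one_apply]
    split_ifs <;> norm_num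

lemma InitialMutationFormula.append_singleton_of_ne (hsc : SignCoherence ι)
    {B0 : Matrix ι ι ℤ} (hB0 : IsSkewSymmetrizable B0) {k j : ι} {u : List ι} {δ : ℤ}
    (hδ : δ = 1 ∨ δ = -1) (h : InitialMutationFormula B0 k u δ)
    (hrow : RowSignCoherent (Gmat (mutate k B0) (u ++ [j]))) {l₀ : ι} (hl₀ : l₀ ≠ k)
    (hCl₀ : Cmat (mutate k B0) u l₀ j ≠ 0) :
    InitialMutationFormula B0 k (u ++ [j]) δ := by
  obtain ⟨hC, hG, hsign⟩ := h
  have hB₁ := hB0.mutate k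
  obtain ⟨D, hD, hs⟩ := id hB₁
  obtain ⟨ε, hε, hcoh₁, -⟩ := (hsc _ hB₁ u).exists_sign j
  -- the `j`-th columns of the two `C`-matrices agree off row `k`, in particular at `l₀`
  have hcoh₀ : ∀ i, 0 ≤ ε * Cmat B0 (k :: u) i j := by
    obtain ⟨ε₀, hε₀, hcoh₀, -⟩ := (hsc B0 hB0 (k :: u)).exists_sign j
    have hl₀j : Cmat B0 (k :: u) l₀ j = Cmat (mutate k B0) u l₀ j := by
      rw [hC, Fmat_mul_apply, if_neg hl₀]
    obtain rfl : ε₀ = ε :=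
      eq_of_mul_nonneg_of_ne_zero hε₀ hε (hl₀j ▸ hcoh₀ l₀) (hcoh₁ l₀) hCl₀
    exact hcoh₀
  have hG₁ := Gmat_append_singleton_eq_mul_Emat hsc hB₁ hε hcoh₁
  refine ⟨?_, ?_, ?_⟩
  · rw [← List.cons_append, Cmat_append_singleton_eq_mul_Fmat hε hcoh₀,
      Cmat_append_singleton_eq_mul_Fmat hε hcoh₁, hC, Bmat_cons, Matrix.mul_assoc]
  · rw [← List.cons_append, Gmat_append_singleton_eq_mul_Emat hsc hB0 hε hcoh₀, hG₁, hG,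
      Bmat_cons, Matrix.mul_assoc]
  · obtain ⟨l₁, hl₁j, hl₁⟩ := exists_ne_apply_ne_zero_of_mul_transpose_eq_diagonal
      (fun i => inv_ne_zero (hD i).ne')
      (mul_diagonal_inv_mul_transpose (fun i => (hD i).ne')
        (Cmat_transpose_mul_diagonal_mul_Gmat hsc hs hD u))
      (isUnit_Gmat hsc hB₁ u) hl₀ hCl₀
    have hl₁' : Gmat (mutate k B0) (u ++ [j]) k l₁ = Gmat (mutate k B0) u k l₁ := by
      rw [hG₁, mul_Emat_apply, if_neg hl₁j]
    refine mul_nonpos_of_mul_neg (hrow k) hδ (l₁ := l₁) ?_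
    rw [hl₁']
    exact lt_of_le_of_ne (hsign l₁) (mul_ne_zero (by omega) hl₁)

lemma InitialMutationFormula.append_singleton_of_col_eq_zero (hsc : SignCoherence ι)
    {B0 : Matrix ι ι ℤ} (hB0 : IsSkewSymmetrizable B0) {k j : ι} {u : List ι} {δ : ℤ}
    (hδ : δ = 1 ∨ δ = -1) (h : InitialMutationFormula B0 k u δ)
    (hcol : ∀ l ≠ k, Cmat (mutate k B0) u l j = 0) :
    InitialMutationFormula B0 k (u ++ [j]) (-δ) := by
  obtain ⟨hC, hG, hsign⟩ := h
  have hB₁ := hB0.mutate k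
  obtain ⟨D, hD, hs⟩ := id hB₁
  set B₁ := mutate k B0
  set c := Cmat B₁ u k j
  have hc : c = 1 ∨ c = -1 :=
    Int.isUnit_iff.1 (isUnit_apply_of_col_eq_zero (isUnit_Cmat hsc hB₁ u) hcol)
  have hC₁ : ∀ i, Cmat B₁ u i j = if i = k then c else 0 := fun i => by
    split_ifs with hi
    · rw [hi]
    · exact hcol i hi
  have hG₁ : ∀ l, Gmat B₁ u k l = if l = j then c else 0 :=
    row_eq_single_of_col_eq_single hD (Cmat_transpose_mul_diagonal_mul_Gmat hsc hs hD u)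
      (isUnit_Gmat hsc hB₁ u) hc hC₁
  obtain rfl : δ = -c := by
    have := hsign j
    rw [hG₁, if_pos rfl] at this
    rcases hδ with rfl | rfl <;> rcases hc with hc | hc <;> rw [hc] at this ⊢ <;> omega
  rw [neg_neg]
  have hB₁k : B₁ k k = 0 := hB₁.apply_self k
  have hBtj : Bmat B₁ u j j = 0 := (hB₁.Bmat u).apply_self j
  have hBC := mul_Cmat_eq_Gmat_mul_Bmat hsc hB₁ u
  have hc' : -c = 1 ∨ -c = -1 := by omega
  have hcoh₁ : ∀ i, 0 ≤ c * Cmat B₁ u i j := fun i => by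
    rw [hC₁]
    split_ifs <;> rcases hc with hc | hc <;> rw [hc] <;> norm_num
  have hcoh₀ : ∀ i, 0 ≤ -c * Cmat B0 (k :: u) i j := fun i => by
    rw [hC, Fmat_mul_apply]
    by_cases hi : i = k
    · simp only [hi, ↓reduceIte, hC₁, mul_ite, mul_zero, Finset.sum_ite_eq', Finset.mem_univ,
        hB₁k, max_self, zero_mul, add_zero]
      rcases hc with hc | hc <;> rw [hc] <;> norm_num
    · simp [hi, hC₁]
  refine ⟨?_, ?_, fun l => ?_⟩
  · rw [← List.cons_append, Cmat_append_singleton_eq_mul_Fmat hc' hcoh₀,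
      Cmat_append_singleton_eq_mul_Fmat hc hcoh₁, hC, Bmat_cons, ← Matrix.mul_assoc,
      Fmat_neg_mul_mul_Fmat_neg hC₁ hG₁ hBC hB₁k hBtj, Matrix.mul_assoc]
  · rw [← List.cons_append, Gmat_append_singleton_eq_mul_Emat hsc hB0 hc' hcoh₀,
      Gmat_append_singleton_eq_mul_Emat hsc hB₁ hc hcoh₁, hG, Bmat_cons, ← Matrix.mul_assoc,
      Emat_neg_mul_mul_Emat_neg hC₁ hG₁ hBC hB₁k hBtj, Matrix.mul_assoc]
  · rw [Gmat_append_singleton_eq_mul_Emat hsc hB₁ hc hcoh₁, mul_Emat_apply]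
    by_cases hl : l = j
    · simp only [hl, ↓reduceIte, hG₁, ite_mul, zero_mul, Finset.sum_ite_eq', Finset.mem_univ,
        hBtj, mul_zero, neg_zero, max_self, add_zero]
      rcases hc with hc | hc <;> rw [hc] <;> norm_num
    · simp [hl, hG₁]

lemma InitialMutationAt.append_singleton (hsc : SignCoherence ι) {k j : ι} {u : List ι}
    (h : InitialMutationAt k u) (hdual : DualityAt (u ++ [j])) :
    InitialMutationAt k (u ++ [j]) := by
  intro B0 hB0
  obtain ⟨δ, hδ, hδu⟩ := h B0 hB0
  by_cases hcol : ∀ l ≠ k, Cmat (mutate k B0) u l j = 0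
  · exact ⟨-δ, by omega, hδu.append_singleton_of_col_eq_zero hsc hB0 hδ hcol⟩
  · push Not at hcol
    obtain ⟨l₀, hl₀, hCl₀⟩ := hcol
    exact ⟨δ, hδ, hδu.append_singleton_of_ne hsc hB0 hδ
      (hdual.rowSignCoherent hsc (hB0.mutate k)) hl₀ hCl₀⟩

lemma dualityAt_and_initialMutationAt (hsc : SignCoherence ι) (w : List ι) :
    DualityAt w ∧ ∀ k, InitialMutationAt k w := by
  induction h : w.length using Nat.strong_induction_on generalizing w with
  | _ n ih =>
    have hdual : DualityAt w := by
      rcases w with _ | ⟨k, u⟩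
      · exact dualityAt_nil
      · obtain ⟨hu, hSu⟩ := ih u.length (by simp [← h]) u rfl
        exact hu.cons (hSu k)
    refine ⟨hdual, fun k => ?_⟩
    rcases List.eq_nil_or_concat' w with rfl | ⟨u, j, rfl⟩
    · exact initialMutationAt_nil k
    · exact ((ih u.length (by simp [← h]) u rfl).2 k).append_singleton hsc hdual

theorem rowSignCoherent_Gmat (hsc : SignCoherence ι) {B0 : Matrix ι ι ℤ}
    (hB0 : IsSkewSymmetrizable B0) (w : List ι) : RowSignCoherent (Gmat B0 w) :=
  (dualityAt_and_initialMutationAt hsc w).1.rowSignCoherent hsc hB0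

lemma Gcone_subset_of_nonneg {B0 : Matrix ι ι ℤ} {w : List ι} {i : ι}
    (h : ∀ j, 0 ≤ Gmat B0 w i j) : Gcone B0 w ⊆ {v | 0 ≤ v i} := by
  rintro _ ⟨a, ha, rfl⟩
  exact Finset.sum_nonneg fun j _ => mul_nonneg (ha j) (by exact_mod_cast h j)

lemma Gcone_subset_of_nonpos {B0 : Matrix ι ι ℤ} {w : List ι} {i : ι}
    (h : ∀ j, Gmat B0 w i j ≤ 0) : Gcone B0 w ⊆ {v | v i ≤ 0} := by
  rintro _ ⟨a, ha, rfl⟩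
  exact Finset.sum_nonpos fun j _ => mul_nonpos_of_nonneg_of_nonpos (ha j) (by exact_mod_cast h j)

end Duality

theorem Gcone_inter_hyperplane_subset_frontier_general (n : ℕ)
    (hsc : ∀ B : Matrix (Fin n) (Fin n) ℤ, IsSkewSymmetrizable B →
      ∀ w : List (Fin n), ColSignCoherent (Cmat B w))
    (B0 : Matrix (Fin n) (Fin n) ℤ) (hB0 : IsSkewSymmetrizable B0)
    (w : List (Fin n)) (i : Fin n) :
    Gcone B0 w ∩ {v : Fin n → ℝ | v i = 0} ⊆ frontier (Gcone B0 w) := by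
  rintro v ⟨hv, hvi : v i = 0⟩
  rcases rowSignCoherent_Gmat hsc hB0 w i with ⟨-, hpos⟩ | ⟨-, hneg⟩
  · exact (isOpenMap_eval i).mem_frontier_of_subset_preimage (T := Set.Ici 0)
      (Gcone_subset_of_nonneg hpos) hv (by simp [hvi])
  · exact (isOpenMap_eval i).mem_frontier_of_subset_preimage (T := Set.Iic 0)
      (Gcone_subset_of_nonpos hneg) hv (by simp [hvi])

/-- The `G`-cone meets each coordinate hyperplane only in its boundary. -/
theorem Gcone_inter_hyperplane_subset_frontier (n : ℕ) (hn : 1 ≤ n)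
    (hsc : ∀ B : Matrix (Fin n) (Fin n) ℤ, IsSkewSymmetrizable B →
      ∀ w : List (Fin n), ColSignCoherent (Cmat B w))
    (B0 : Matrix (Fin n) (Fin n) ℤ) (hB0 : IsSkewSymmetrizable B0)
    (w : List (Fin n)) (i : Fin n) :
    Gcone B0 w ∩ {v : Fin n → ℝ | v i = 0} ⊆ frontier (Gcone B0 w) :=
  Gcone_inter_hyperplane_subset_frontier_general n hsc B0 hB0 w i

end ClusterPattern
end

section
/- Let B⁰ be a skew-symmetrizable n×n integer matrix, k ∈ {1,…,n}, and B¹ = μ_k(B⁰). Define φ : ℝⁿ → ℝⁿ by φ(v) = (J_k + [B⁰]₊^{•k})v if v_k ≥ 0 and φ(v) = (J_k + [−B⁰]₊^{•k})v if v_k ≤ 0, and ψ : ℝⁿ → ℝⁿ by the same formulas with B¹ in place of B⁰. Then ψ ∘ φ = φ ∘ ψ = id on ℝⁿ. -/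
open Matrix

namespace ClusterPattern

variable {ι : Type*} [Fintype ι] [DecidableEq ι]

/-- The piecewise-linear map `φ` associated to `B` and `k`. -/
noncomputable def plMap (B : Matrix ι ι ℤ) (k : ι) (v : ι → ℝ) : ι → ℝ :=
  if 0 ≤ v k then ((Jmat k + colSel k (posPart B)).map (Int.cast : ℤ → ℝ)).mulVec v
  else ((Jmat k + colSel k (posPart (-B))).map (Int.cast : ℤ → ℝ)).mulVec v

lemma diag_zero {B : Matrix ι ι ℤ} (hB : IsSkewSymmetrizable B) (k : ι) : B k k = 0 := by
  obtain ⟨D, hD, h⟩ := hB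
  have := h k k
  have h2 : D k * (B k k : ℚ) = 0 := by linarith
  have := (hD k).ne'
  exact_mod_cast (mul_eq_zero.mp h2).resolve_left this

lemma mulsq (k : ι) (A : Matrix ι ι ℤ) (hA : A k k = 0) :
    (Jmat k + colSel k A) * (Jmat k + colSel k A) = 1 := by
  ext i j
  simp only [Matrix.mul_apply, Matrix.add_apply, Jmat, colSel, Matrix.diagonal_apply,
    Matrix.of_apply, Matrix.one_apply]
  rw [Finset.sum_congr rfl (g := fun l =>
    (if i = l then (if i = k then -1 else 1) else 0) * (if l = j then (if l = k then -1 else 1) else 0)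
    + ((if i = l then (if i = k then -1 else 1) else 0) * (if j = k then A l j else 0)
    + (if l = k then A i l else 0) * (if l = j then (if l = k then -1 else 1) else 0)
    + (if l = k then A i l else 0) * (if j = k then A l j else 0)))]
  · rw [Finset.sum_add_distrib, Finset.sum_add_distrib, Finset.sum_add_distrib]
    by_cases hik : i = k <;> by_cases hjk : j = k <;> by_cases hij : i = j <;>
      simp_all <;> ring
  · intro l _; ring

lemma step (k : ι) (A : Matrix ι ι ℤ) (hA : A k k = 0) (v : ι → ℝ) :
    ((Jmat k + colSel k A).map (Int.cast : ℤ → ℝ)).mulVec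
      (((Jmat k + colSel k A).map (Int.cast : ℤ → ℝ)).mulVec v) = v := by
  have hc : (Int.cast : ℤ → ℝ) = ⇑(Int.castRingHom ℝ) := rfl
  rw [Matrix.mulVec_mulVec, hc, ← Matrix.map_mul, mulsq k A hA]
  simp

lemma apply_k (k : ι) (A : Matrix ι ι ℤ) (hA : A k k = 0) (v : ι → ℝ) :
    (((Jmat k + colSel k A).map (Int.cast : ℤ → ℝ)).mulVec v) k = -v k := by
  simp only [Matrix.mulVec, dotProduct, Matrix.map_apply, Matrix.add_apply, Jmat,
    colSel, Matrix.diagonal_apply, Matrix.of_apply]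
  rw [Finset.sum_congr rfl (g := fun l => (if k = l then -(1:ℝ) else 0) * v l)]
  · simp
  · intro l _
    by_cases h : l = k
    · subst h; simp [hA]
    · simp [h, Ne.symm h]

lemma colSel_vk_zero (k : ι) (A : Matrix ι ι ℤ) (v : ι → ℝ) (hv : v k = 0) :
    ((Jmat k + colSel k A).map (Int.cast : ℤ → ℝ)).mulVec v
      = ((Jmat k).map (Int.cast : ℤ → ℝ)).mulVec v := by
  funext i
  simp only [Matrix.mulVec, dotProduct, Matrix.map_apply, Matrix.add_apply, colSel,
    Matrix.of_apply]
  refine Finset.sum_congr rfl fun l _ => ?_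
  by_cases h : l = k <;> simp [h, hv]

lemma Jsq (k : ι) : Jmat k * Jmat k = (1 : Matrix ι ι ℤ) := by
  rw [Jmat, Matrix.diagonal_mul_diagonal]
  ext i j
  by_cases h : i = j
  · subst h
    by_cases h2 : i = k <;> simp [Matrix.diagonal_apply, Matrix.one_apply, h2]
  · simp [Matrix.diagonal_apply, Matrix.one_apply, h]

lemma Jstep (k : ι) (v : ι → ℝ) :
    ((Jmat k).map (Int.cast : ℤ → ℝ)).mulVec (((Jmat k).map (Int.cast : ℤ → ℝ)).mulVec v) = v := by
  have hc : (Int.cast : ℤ → ℝ) = ⇑(Int.castRingHom ℝ) := rfl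
  rw [Matrix.mulVec_mulVec, hc, ← Matrix.map_mul, Jsq k]
  simp

lemma plMap_inv (B B' : Matrix ι ι ℤ) (k : ι) (hB : B k k = 0) (hB' : B k k = 0)
    (h1 : colSel k (posPart B') = colSel k (posPart (-B)))
    (h2 : colSel k (posPart (-B')) = colSel k (posPart B)) (v : ι → ℝ) :
    plMap B' k (plMap B k v) = v := by
  have hBp : posPart B k k = 0 := by simp [posPart, hB]
  have hBn : posPart (-B) k k = 0 := by simp [posPart, hB]
  unfold plMap
  by_cases hv : 0 ≤ v k
  · rw [if_pos hv]
    have hwk := apply_k k (posPart B) hBp v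
    by_cases hv0 : v k = 0
    · have hw0 : (((Jmat k + colSel k (posPart B)).map (Int.cast : ℤ → ℝ)).mulVec v) k = 0 := by
        rw [hwk, hv0, neg_zero]
      rw [if_pos (le_of_eq hw0.symm), colSel_vk_zero _ _ _ hw0,
        colSel_vk_zero _ _ v hv0, Jstep]
    · have hneg : ¬ 0 ≤ (((Jmat k + colSel k (posPart B)).map (Int.cast : ℤ → ℝ)).mulVec v) k := by
        rw [hwk]
        have : 0 < v k := lt_of_le_of_ne hv (Ne.symm hv0)
        linarith
      rw [if_neg hneg, h2]
      exact step k (posPart B) hBp v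
  · rw [if_neg hv]
    push_neg at hv
    have hwk := apply_k k (posPart (-B)) hBn v
    have hpos : 0 ≤ (((Jmat k + colSel k (posPart (-B))).map (Int.cast : ℤ → ℝ)).mulVec v) k := by
      rw [hwk]; linarith
    rw [if_pos hpos, h1]
    exact step k (posPart (-B)) hBn v

lemma colSel_mutate (k : ι) (B : Matrix ι ι ℤ) :
    colSel k (posPart (mutate k B)) = colSel k (posPart (-B)) := by
  ext i j
  by_cases h : j = k <;> simp [colSel, posPart, mutate, h]

lemma colSel_neg_mutate (k : ι) (B : Matrix ι ι ℤ) :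
    colSel k (posPart (-(mutate k B))) = colSel k (posPart B) := by
  ext i j
  by_cases h : j = k <;> simp [colSel, posPart, mutate, h]

/-- The piecewise-linear maps associated to `B⁰` and `μ_k(B⁰)` are mutually inverse. -/
theorem plMap_mutual_inverse (n : ℕ) (hn : 1 ≤ n)
    (B0 : Matrix (Fin n) (Fin n) ℤ) (hB0 : IsSkewSymmetrizable B0) (k : Fin n)
    (v : Fin n → ℝ) :
    plMap (mutate k B0) k (plMap B0 k v) = v ∧
    plMap B0 k (plMap (mutate k B0) k v) = v := by
  have hd : B0 k k = 0 := diag_zero hB0 k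
  have hd' : (mutate k B0) k k = 0 := by simp [mutate, hd]
  constructor
  · exact plMap_inv B0 (mutate k B0) k hd hd (colSel_mutate k B0) (colSel_neg_mutate k B0) v
  · exact plMap_inv (mutate k B0) B0 k hd' hd'
      (by rw [colSel_neg_mutate]) (by rw [colSel_mutate]) v


end ClusterPattern
end
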